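/- For every a ∈ Θ̄ and every b ∈ M \ Θ̄, both ab ∈ M \ Θ̄ and ba ∈ M \ Θ̄. -/

import Mathlib

namespace GarsideOrder

variable {G : Type*} [Group G]

/-- `a ≤_R b` iff `b * a⁻¹ ∈ M`. -/
def leR (M : Submonoid G) (a b : G) : Prop := b * a⁻¹ ∈ M

/-- `a ≤_L b` iff `a⁻¹ * b ∈ M`. -/
def leL (M : Submonoid G) (a b : G) : Prop := a⁻¹ * b ∈ M

/-- Right divisors (in `M`) of `a`. -/
def DivR (M : Submonoid G) (a : G) : Set G := {b : G | b ∈ M ∧ leR M b a}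

/-- Left divisors (in `M`) of `a`. -/
def DivL (M : Submonoid G) (a : G) : Set G := {b : G | b ∈ M ∧ leL M b a}

/-- `a` is balanced if its sets of right and left divisors coincide. -/
def Balanced (M : Submonoid G) (a : G) : Prop := DivR M a = DivL M a

open Classical in
/-- The `N`-tail of `a`: the unique `b ∈ N` having the same right divisors lying in `N`
as `a` (w.r.t. the divisibility of the ambient monoid `M`). -/
noncomputable def tail (M N : Submonoid G) (a : G) : G :=
  if h : ∃ b : G, b ∈ N ∧
      {c : G | c ∈ N ∧ leR M c a} = {c : G | c ∈ N ∧ leR M c b} then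
    h.choose
  else 1

/-- Iterated stripping of alternating tails: first the `M₁`-tail, then the `N`-tail, etc. -/
noncomputable def strip (M M₁ N : Submonoid G) : ℕ → G → G
  | 0, a => a
  | i + 1, a =>
      strip M M₁ N i a *
        (tail M (if i % 2 = 0 then M₁ else N) (strip M M₁ N i a))⁻¹

/-- The breadth of `a`: the length of the alternating form of `a`, i.e. the least `p ≥ 1`
such that stripping alternating tails `p` times reaches `1`. -/
noncomputable def bh (M M₁ N : Submonoid G) (a : G) : ℕ :=
  sInf {p : ℕ | 1 ≤ p ∧ strip M M₁ N p a = 1}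

/-- The depth of `a`: `(bh a - 1)/2` if `bh a` is odd, `bh a / 2` if `bh a` is even;
in both cases this is `bh a / 2` with natural division. -/
noncomputable def dpt (M M₁ N : Submonoid G) (a : G) : ℕ := bh M M₁ N a / 2

/-- `a ∈ M` is unmovable if `Δ` does not right-divide it. -/
def Unmovable (M : Submonoid G) (Δ a : G) : Prop := a ∈ M ∧ ¬ leR M Δ a

/-- `α` is `(H, G₁)`-negative: its `Δ`-form is `a Δ^{-k}` with `k ≥ 1` and
`dpt a < dpt (Δ^k)`. -/
def Negative (M M₁ N : Submonoid G) (Δ : G) (α : G) : Prop :=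
  ∃ a : G, ∃ k : ℕ, Unmovable M Δ a ∧ 1 ≤ k ∧ α = a * (Δ ^ k)⁻¹ ∧
    dpt M M₁ N a < dpt M M₁ N (Δ ^ k)

/-- `α` is `(H, G₁)`-positive if `α⁻¹` is `(H, G₁)`-negative. -/
def Positive (M M₁ N : Submonoid G) (Δ : G) (α : G) : Prop :=
  Negative M M₁ N Δ α⁻¹

/-- The set `Θ` of theta elements `θ^k a₀`, `k ≥ 1`, `a₀ ∈ M₁`. -/
def thetaSet (M₁ : Submonoid G) (θ : G) : Set G :=
  {x : G | ∃ k : ℕ, 1 ≤ k ∧ ∃ a₀ ∈ M₁, x = θ ^ k * a₀}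

/-- `Θ̄ = Θ ∪ M₁`. -/
def thetaBar (M₁ : Submonoid G) (θ : G) : Set G := thetaSet M₁ θ ∪ (M₁ : Set G)

/-- Condition A with constant `ζ`: `dpt (Δ^k) = ζ k + 1` for all `k ≥ 1`. -/
def CondA (M M₁ N : Submonoid G) (Δ : G) (ζ : ℕ) : Prop :=
  ∀ k : ℕ, 1 ≤ k → dpt M M₁ N (Δ ^ k) = ζ * k + 1

/-- Condition B with constant `ζ`. -/
def CondB (M M₁ N : Submonoid G) (Δ θ : G) (ζ : ℕ) : Prop :=
  ∀ a b c : G, ∀ t : ℤ,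
    Unmovable M Δ a → Unmovable M Δ b →
    ¬(a ∈ thetaBar M₁ θ ∧ b ∈ thetaBar M₁ θ) →
    Unmovable M Δ c → a * b = c * Δ ^ t →
    ∃ ε : ℕ, ε ≤ 1 ∧
      (dpt M M₁ N c : ℤ) =
        (dpt M M₁ N a : ℤ) + (dpt M M₁ N b : ℤ) - (ζ : ℤ) * t - (ε : ℤ) ∧
      ((a ∈ thetaSet M₁ θ ∨ b ∈ thetaSet M₁ θ ∨ c ∈ M₁) → ε = 1)

/-- A Garside structure with group of fractions the subgroup `car`. -/
structure IsGarsideOn (car : Subgroup G) (M : Submonoid G) (Δ : G) : Prop where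
  M_sub : (M : Set G) ⊆ (car : Set G)
  delta_mem : Δ ∈ M
  units_trivial : ∀ x : G, x ∈ M → x⁻¹ ∈ M → x = 1
  noetherian : ∀ a ∈ M, ∃ n : ℕ, 1 ≤ n ∧ ∀ l : List G,
      (∀ x ∈ l, x ∈ M ∧ x ≠ 1) → l.prod = a → l.length ≤ n
  balanced : Balanced M Δ
  div_finite : (DivR M Δ).Finite
  div_gen_monoid : Submonoid.closure (DivR M Δ) = M
  div_gen_group : Subgroup.closure (DivR M Δ) = car
  meet : ∀ a ∈ car, ∀ b ∈ car, ∃ c ∈ car, leR M c a ∧ leR M c b ∧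
      ∀ d ∈ car, leR M d a → leR M d b → leR M d c
  join : ∀ a ∈ car, ∀ b ∈ car, ∃ c ∈ car, leR M a c ∧ leR M b c ∧
      ∀ d ∈ car, leR M a d → leR M b d → leR M c d

/-- The parabolic submonoid determined by `δ`: the submonoid generated by `Div(δ)`. -/
def parM (M : Submonoid G) (δ : G) : Submonoid G := Submonoid.closure (DivR M δ)

/-- The parabolic subgroup determined by `δ`: the subgroup generated by `Div(δ)`. -/
def parG (M : Submonoid G) (δ : G) : Subgroup G := Subgroup.closure (DivR M δ)

/-- `δ` determines a parabolic substructure of `(G, M, Δ)`. -/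
structure IsParabolic (M : Submonoid G) (Δ δ : G) : Prop where
  mem : δ ∈ M
  balanced : Balanced M δ
  div_eq : DivR M δ = DivR M Δ ∩ (parM M δ : Set G)

/-- The setting of Section 3: a Garside structure `(car, M, Δ)` together with two
parabolic substructures `(H, N, Λ)` (given by `lam`) and `(G₁, M₁, Δ₁)` (given by `δ1`),
with `N ≠ M`, `M₁ ≠ M`, `N ∪ M₁` generating `M`, `Δ` central, `Δ₁` central in `G₁`. -/
structure Setting (G : Type*) [Group G] where
  car : Subgroup G
  M : Submonoid G
  Δ : G
  δ1 : G
  lam : G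
  garside : IsGarsideOn car M Δ
  par1 : IsParabolic M Δ δ1
  parH : IsParabolic M Δ lam
  N_ne : parM M lam ≠ M
  M1_ne : parM M δ1 ≠ M
  unionGen : Submonoid.closure ((parM M lam : Set G) ∪ (parM M δ1 : Set G)) = M
  delta_central : ∀ g ∈ car, Δ * g = g * Δ
  delta1_central : ∀ g ∈ parG M δ1, δ1 * g = g * δ1

namespace Setting

variable (S : Setting G)

/-- The parabolic submonoid `M₁`. -/
def M₁ : Submonoid G := parM S.M S.δ1

/-- The parabolic submonoid `N`. -/
def Nsub : Submonoid G := parM S.M S.lam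

/-- The parabolic subgroup `G₁`. -/
def G₁ : Subgroup G := parG S.M S.δ1

/-- `θ = Δ Δ₁⁻¹`. -/
def theta : G := S.Δ * S.δ1⁻¹

/-- The set of `(H, G₁)`-negative elements. -/
def Neg : Set G := {α : G | Negative S.M S.M₁ S.Nsub S.Δ α}

/-- The set of `(H, G₁)`-positive elements. -/
def Pos : Set G := {α : G | α⁻¹ ∈ S.Neg}

/-- Condition A. -/
def condA (ζ : ℕ) : Prop := CondA S.M S.M₁ S.Nsub S.Δ ζ

/-- Condition B. -/
def condB (ζ : ℕ) : Prop := CondB S.M S.M₁ S.Nsub S.Δ S.theta ζ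

/-- `(H, G₁)` is a Dehornoy structure: `PP ⊆ P`, `G₁ P G₁ ⊆ P`, and the group is the
disjoint union of `P`, `P⁻¹` and `G₁`. -/
def IsDehornoy : Prop :=
  (∀ α ∈ S.Pos, ∀ β ∈ S.Pos, α * β ∈ S.Pos) ∧
  (∀ g₁ ∈ S.G₁, ∀ α ∈ S.Pos, ∀ g₂ ∈ S.G₁, g₁ * α * g₂ ∈ S.Pos) ∧
  (∀ α ∈ S.car, α ∈ S.Pos ∨ α ∈ S.Neg ∨ α ∈ S.G₁) ∧
  (∀ α : G, ¬(α ∈ S.Pos ∧ α ∈ S.Neg)) ∧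
  (∀ α : G, ¬(α ∈ S.Pos ∧ α ∈ S.G₁)) ∧
  (∀ α : G, ¬(α ∈ S.Neg ∧ α ∈ S.G₁))

end Setting

end GarsideOrder

/-!
Since `Δ` is central and `Δ₁` is central in `G₁`, `θ = ΔΔ₁⁻¹` commutes with `G₁`, so the
subgroup generated by `θ` and `G₁` is `θ^ℤ G₁`, and it contains `Θ̄`. The heart of the proof is
the converse on `M`: every element of `M` of the form `θ^T g` with `g ∈ G₁` lies in `Θ̄`. Given
this, if `ab ∈ Θ̄` then `b = a⁻¹(ab)` lies in `M ∩ θ^ℤ G₁ ⊆ Θ̄`, and likewise for `ba`.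

For the converse, write `g = P Δ₁⁻ⁿ` with `P ∈ M₁`. The main tool is that `M₁` is closed under
left divisors in `M`; it rests on the fact that a common left divisor of `Δ` and `Δ₁ⁿ` left-divides
`Δ₁`, proved by induction on `n` together with the coprimality of `θ` and `Δ₁ⁿ`. When `T < 0`
the element left-divides `P`; when `T ≥ 0` one peels off one factor `Δ = θΔ₁` at a time.
-/

namespace GarsideOrder

variable {G : Type*} [Group G]

section Divisibility

variable {M : Submonoid G} {a b c : G}

theorem leL_of_eq_mul {r : G} (h : b = a * r) (hr : r ∈ M) : leL M a b := by
  rwa [leL, h, inv_mul_cancel_left]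

theorem leL_trans (hab : leL M a b) (hbc : leL M b c) : leL M a c := by
  have : a⁻¹ * c = (a⁻¹ * b) * (b⁻¹ * c) := by group
  rw [leL, this]
  exact mul_mem hab hbc

theorem leL_mul_left_iff : leL M (a * b) (a * c) ↔ leL M b c := by
  simp only [leL, mul_inv_rev, mul_assoc, inv_mul_cancel_left]

theorem leL_iff_leR_inv : leL M a b ↔ leR M b⁻¹ a⁻¹ := by
  rw [leL, leR, inv_inv]

theorem Balanced.leL_iff_leR (h : Balanced M a) (hb : b ∈ M) : leL M b a ↔ leR M b a := by
  have := Set.ext_iff.mp h b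
  exact ⟨fun hl => (this.mpr ⟨hb, hl⟩).2, fun hr => (this.mp ⟨hb, hr⟩).2⟩

end Divisibility

theorem mem_thetaBar_iff {M₁ : Submonoid G} {θ x : G} :
    x ∈ thetaBar M₁ θ ↔ ∃ k : ℕ, ∃ a₀ ∈ M₁, x = θ ^ k * a₀ := by
  constructor
  · rintro (⟨k, -, a₀, ha₀, rfl⟩ | hx)
    · exact ⟨k, a₀, ha₀, rfl⟩
    · exact ⟨0, x, hx, by simp⟩
  · rintro ⟨_ | k, a₀, ha₀, rfl⟩
    · exact Or.inr (by simpa using ha₀)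
    · exact Or.inl ⟨k + 1, Nat.succ_pos k, a₀, ha₀, rfl⟩

theorem IsGarsideOn.exists_leL_lcm {car : Subgroup G} {M : Submonoid G} {Δ : G}
    (hG : IsGarsideOn car M Δ) {a b : G} (ha : a ∈ car) (hb : b ∈ car) :
    ∃ w, leL M a w ∧ leL M b w ∧ ∀ d ∈ car, leL M a d → leL M b d → leL M w d := by
  obtain ⟨c, -, hca, hcb, hc⟩ := hG.meet a⁻¹ (inv_mem ha) b⁻¹ (inv_mem hb)
  refine ⟨c⁻¹, ?_, ?_, fun d hd hda hdb => ?_⟩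
  · simpa [leL_iff_leR_inv] using hca
  · simpa [leL_iff_leR_inv] using hcb
  · rw [leL_iff_leR_inv] at hda hdb ⊢
    simpa using hc d⁻¹ (inv_mem hd) hda hdb

namespace Setting

variable (S : Setting G) {x y : G}

theorem M₁_le_M : S.M₁ ≤ S.M :=
  Submonoid.closure_le.mpr fun _ hx => hx.1

theorem M₁_le_G₁ : S.M₁ ≤ S.G₁.toSubmonoid :=
  Submonoid.closure_le.mpr fun _ hx => Subgroup.subset_closure hx

theorem δ1_mem_DivR : S.δ1 ∈ DivR S.M S.δ1 :=
  ⟨S.par1.mem, by simp [leR, one_mem]⟩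

theorem δ1_mem_M₁ : S.δ1 ∈ S.M₁ :=
  Submonoid.subset_closure S.δ1_mem_DivR

theorem δ1_mem_G₁ : S.δ1 ∈ S.G₁ :=
  S.M₁_le_G₁ S.δ1_mem_M₁

theorem theta_mem : S.theta ∈ S.M := by
  have h := S.δ1_mem_DivR
  rw [S.par1.div_eq] at h
  exact h.1.2

theorem theta_mul_δ1 : S.theta * S.δ1 = S.Δ :=
  inv_mul_cancel_right _ _

theorem thetaBar_subset_M : thetaBar S.M₁ S.theta ⊆ S.M := by
  intro x hx
  obtain ⟨k, a₀, ha₀, rfl⟩ := mem_thetaBar_iff.mp hx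
  exact mul_mem (pow_mem S.theta_mem k) (S.M₁_le_M ha₀)

theorem commute_δ1 (hx : x ∈ S.G₁) : Commute S.δ1 x :=
  S.delta1_central x hx

theorem commute_Δ (hc : S.car = ⊤) (x : G) : Commute S.Δ x :=
  S.delta_central x (hc ▸ Subgroup.mem_top x)

theorem commute_theta (hc : S.car = ⊤) (hx : x ∈ S.G₁) : Commute S.theta x :=
  (S.commute_Δ hc x).mul_left (S.commute_δ1 hx).inv_left

theorem δ1_mul_theta (hc : S.car = ⊤) : S.δ1 * S.theta = S.Δ := by
  rw [(S.commute_theta hc S.δ1_mem_G₁).symm.eq, theta_mul_δ1]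

theorem mem_M₁_of_leL_δ1 (hx : x ∈ S.M) (h : leL S.M x S.δ1) : x ∈ S.M₁ :=
  Submonoid.subset_closure ⟨hx, (S.par1.balanced.leL_iff_leR hx).mp h⟩

theorem leR_δ1_of_mem_M₁ (hx : x ∈ S.M₁) (h : leR S.M x S.Δ) : leR S.M x S.δ1 := by
  have : x ∈ DivR S.M S.δ1 := by
    rw [S.par1.div_eq]
    exact ⟨⟨S.M₁_le_M hx, h⟩, hx⟩
  exact this.2

theorem leL_δ1_of_leL_δ1_pow_succ (hc : S.car = ⊤) {k : ℕ}
    (hk : ∀ c ∈ S.M, leL S.M c S.theta → leL S.M c (S.δ1 ^ k) → c = 1)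
    {c : G} (hck : leL S.M c (S.δ1 ^ (k + 1))) (hcΔ : leL S.M c S.Δ) : leL S.M c S.δ1 := by
  obtain ⟨w, hcw, hδw, hw⟩ :=
    S.garside.exists_leL_lcm (a := c) (b := S.δ1) (hc ▸ trivial) (hc ▸ trivial)
  have hwk : leL S.M w (S.δ1 * S.δ1 ^ k) :=
    hw _ (hc ▸ trivial) (pow_succ' S.δ1 k ▸ hck) (leL_of_eq_mul rfl (pow_mem S.par1.mem k))
  have hwΔ : leL S.M w (S.δ1 * S.theta) :=
    hw _ (hc ▸ trivial) (S.δ1_mul_theta hc ▸ hcΔ) (leL_of_eq_mul rfl S.theta_mem)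
  -- `δ1⁻¹ w` is a common left divisor of `θ` and `δ1 ^ k`
  have hw₁ : S.δ1⁻¹ * w = 1 :=
    hk _ hδw ((leL_mul_left_iff (a := S.δ1)).mp (by simpa using hwΔ))
      ((leL_mul_left_iff (a := S.δ1)).mp (by simpa using hwk))
  rwa [inv_mul_eq_one.mp hw₁]

theorem eq_one_of_leL_theta_of_leL_δ1_pow (hc : S.car = ⊤) (k : ℕ) {c : G} (hcM : c ∈ S.M)
    (hcθ : leL S.M c S.theta) (hck : leL S.M c (S.δ1 ^ k)) : c = 1 := by
  induction k generalizing c with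
  | zero => exact S.garside.units_trivial c hcM (by simpa [leL] using hck)
  | succ k ih =>
    have hcδ1 : leL S.M c S.δ1 :=
      S.leL_δ1_of_leL_δ1_pow_succ hc (fun _ hc' => ih hc') hck
        (leL_trans hcθ (leL_of_eq_mul S.theta_mul_δ1.symm S.par1.mem))
    have hcM₁ := S.mem_M₁_of_leL_δ1 hcM hcδ1
    -- `δ1 c ∈ M₁` right-divides `Δ`, hence `δ1`, which forces `c⁻¹ ∈ M`
    have hδc : leR S.M (S.δ1 * c) S.Δ := by
      have : S.Δ * (S.δ1 * c)⁻¹ = c⁻¹ * S.theta := by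
        rw [mul_inv_rev, ← mul_assoc, (S.commute_Δ hc c⁻¹).eq, mul_assoc]
        rfl
      rw [leR, this]
      exact hcθ
    have hδcδ1 := S.leR_δ1_of_mem_M₁ (mul_mem S.δ1_mem_M₁ hcM₁) hδc
    rw [leR, mul_inv_rev, ← mul_assoc, (S.commute_δ1 (S.M₁_le_G₁ hcM₁)).inv_right.eq,
      mul_inv_cancel_right] at hδcδ1
    exact S.garside.units_trivial c hcM hδcδ1

theorem leL_δ1_of_leL_δ1_pow (hc : S.car = ⊤) {n : ℕ} {c : G} (hcM : c ∈ S.M)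
    (hcn : leL S.M c (S.δ1 ^ n)) (hcΔ : leL S.M c S.Δ) : leL S.M c S.δ1 := by
  cases n with
  | zero =>
    rw [S.garside.units_trivial c hcM (by simpa [leL] using hcn)]
    simpa [leL] using S.par1.mem
  | succ n =>
    exact S.leL_δ1_of_leL_δ1_pow_succ hc
      (fun _ hc' => S.eq_one_of_leL_theta_of_leL_δ1_pow hc n hc') hcn hcΔ

theorem mem_M₁_of_leL_δ1_pow (hc : S.car = ⊤) {n : ℕ} (hx : x ∈ S.M)
    (h : leL S.M x (S.δ1 ^ n)) : x ∈ S.M₁ := by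
  rw [← S.garside.div_gen_monoid] at hx
  induction hx using Submonoid.closure_induction_left generalizing n with
  | one => exact one_mem _
  | mul_left e he r hr ih =>
    have heM : e ∈ S.M := he.1
    have hrM : r ∈ S.M := S.garside.div_gen_monoid ▸ hr
    have heΔ : leL S.M e S.Δ := (S.garside.balanced.leL_iff_leR heM).mpr he.2
    have heM₁ : e ∈ S.M₁ := S.mem_M₁_of_leL_δ1 heM
      (S.leL_δ1_of_leL_δ1_pow hc heM (leL_trans (leL_of_eq_mul rfl hrM) h) heΔ)
    have hrn : leL S.M r (S.δ1 ^ n) := by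
      have : r⁻¹ * S.δ1 ^ n = (e * r)⁻¹ * S.δ1 ^ n * e := by
        rw [mul_assoc _ _ e, ((S.commute_δ1 (S.M₁_le_G₁ heM₁)).pow_left n).eq]
        group
      rw [leL, this]
      exact mul_mem h heM
    exact mul_mem heM₁ (ih hrn)

theorem exists_mul_eq_δ1_pow {P : G} (hP : P ∈ S.M₁) :
    ∃ Q ∈ S.M₁, ∃ m : ℕ, P * Q = S.δ1 ^ m := by
  induction hP using Submonoid.closure_induction with
  | mem d hd =>
    have hdL : leL S.M d S.δ1 := (S.par1.balanced.leL_iff_leR hd.1).mpr hd.2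
    have hd' : d⁻¹ * S.δ1 ∈ DivR S.M S.δ1 := ⟨hdL, by simpa [leR] using hd.1⟩
    exact ⟨d⁻¹ * S.δ1, Submonoid.subset_closure hd', 1, by group⟩
  | one => exact ⟨1, one_mem _, 0, by simp⟩
  | mul x y _ _ hx hy =>
    obtain ⟨Qx, hQx, mx, ex⟩ := hx
    obtain ⟨Qy, hQy, my, ey⟩ := hy
    refine ⟨Qy * Qx, mul_mem hQy hQx, mx + my, ?_⟩
    calc x * y * (Qy * Qx) = x * (S.δ1 ^ my * Qx) := by rw [← ey]; group
      _ = S.δ1 ^ mx * S.δ1 ^ my := by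
        rw [((S.commute_δ1 (S.M₁_le_G₁ hQx)).pow_left my).eq, ← mul_assoc, ex]
      _ = S.δ1 ^ (mx + my) := (pow_add _ _ _).symm

theorem mem_M₁_of_leL_of_mem_M₁ (hc : S.car = ⊤) {P : G} (hx : x ∈ S.M) (hP : P ∈ S.M₁)
    (h : leL S.M x P) : x ∈ S.M₁ := by
  obtain ⟨Q, hQ, m, hPQ⟩ := S.exists_mul_eq_δ1_pow hP
  exact S.mem_M₁_of_leL_δ1_pow hc hx (leL_trans h (leL_of_eq_mul hPQ.symm (S.M₁_le_M hQ)))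

theorem exists_eq_mul_inv_δ1_pow {g : G} (hg : g ∈ S.G₁) :
    ∃ P ∈ S.M₁, ∃ n : ℕ, g = P * (S.δ1 ^ n)⁻¹ := by
  induction hg using Subgroup.closure_induction with
  | mem d hd => exact ⟨d, Submonoid.subset_closure hd, 0, by simp⟩
  | one => exact ⟨1, one_mem _, 0, by simp⟩
  | mul x y _ _ hx hy =>
    obtain ⟨P, hP, nx, rfl⟩ := hx
    obtain ⟨Q, hQ, ny, rfl⟩ := hy
    refine ⟨P * Q, mul_mem hP hQ, nx + ny, ?_⟩
    calc P * (S.δ1 ^ nx)⁻¹ * (Q * (S.δ1 ^ ny)⁻¹)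
        = P * ((S.δ1 ^ nx)⁻¹ * Q) * (S.δ1 ^ ny)⁻¹ := by group
      _ = P * Q * (S.δ1 ^ (nx + ny))⁻¹ := by
        rw [((S.commute_δ1 (S.M₁_le_G₁ hQ)).pow_left nx).inv_left.eq, pow_add]
        group
  | inv x _ hx =>
    obtain ⟨P, hP, n, rfl⟩ := hx
    obtain ⟨Q, hQ, m, hPQ⟩ := S.exists_mul_eq_δ1_pow hP
    refine ⟨S.δ1 ^ n * Q, mul_mem (pow_mem S.δ1_mem_M₁ n) hQ, m, ?_⟩
    rw [← hPQ]
    group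

theorem exists_leL_Δ_mul_of_leL_Δ_mul (hc : S.car = ⊤) {u v : G} (hu : u ∈ S.M) (hv : v ∈ S.M)
    (h : leL S.M S.Δ (u * v)) :
    ∃ c ∈ S.M, leL S.M c v ∧ leL S.M c S.Δ ∧ leL S.M S.Δ (u * c) := by
  obtain ⟨w, hΔw, huw, hw⟩ :=
    S.garside.exists_leL_lcm (a := S.Δ) (b := u) (hc ▸ trivial) (hc ▸ trivial)
  have hwv : leL S.M w (u * v) := hw _ (hc ▸ trivial) h (leL_of_eq_mul rfl hv)
  have hwΔ : leL S.M w (u * S.Δ) := hw _ (hc ▸ trivial)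
    (leL_of_eq_mul (S.commute_Δ hc u).eq.symm hu) (leL_of_eq_mul rfl S.garside.delta_mem)
  refine ⟨u⁻¹ * w, huw, ?_, ?_, by simpa using hΔw⟩
  · exact (leL_mul_left_iff (a := u)).mp (by simpa using hwv)
  · exact (leL_mul_left_iff (a := u)).mp (by simpa using hwΔ)

theorem leL_Δ_mul_δ1_of_leL_Δ_mul_δ1_pow (hc : S.car = ⊤) {m : ℕ} (hx : x ∈ S.M)
    (h : leL S.M S.Δ (x * S.δ1 ^ m)) : leL S.M S.Δ (x * S.δ1) := by
  obtain ⟨c, hcM, hcm, hcΔ, hΔc⟩ :=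
    S.exists_leL_Δ_mul_of_leL_Δ_mul hc hx (pow_mem S.par1.mem m) h
  exact leL_trans hΔc (leL_mul_left_iff.mpr (S.leL_δ1_of_leL_δ1_pow hc hcM hcm hcΔ))

theorem mem_thetaBar_of_mul_δ1_pow_eq (hc : S.car = ⊤) (t : ℕ) {m : ℕ} {w : G} (hx : x ∈ S.M)
    (hw : w ∈ S.M₁) (h : x * S.δ1 ^ m = S.Δ ^ t * w) : x ∈ thetaBar S.M₁ S.theta := by
  induction t generalizing x w with
  | zero =>
    refine Or.inr (S.mem_M₁_of_leL_of_mem_M₁ hc hx hw (leL_of_eq_mul ?_ (pow_mem S.par1.mem m)))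
    simpa using h.symm
  | succ t ih =>
    have hΔ : leL S.M S.Δ (x * S.δ1) := by
      refine S.leL_Δ_mul_δ1_of_leL_Δ_mul_δ1_pow hc (m := m) hx (leL_of_eq_mul ?_
        (mul_mem (pow_mem S.garside.delta_mem t) (S.M₁_le_M hw)))
      rw [h, pow_succ', mul_assoc]
    -- strip one factor `Δ = θ δ1` and recurse on `x' = Δ⁻¹ x δ1`
    have h' : S.Δ⁻¹ * (x * S.δ1) * S.δ1 ^ m = S.Δ ^ t * (w * S.δ1) := by
      calc S.Δ⁻¹ * (x * S.δ1) * S.δ1 ^ m = S.Δ⁻¹ * (x * S.δ1 ^ m) * S.δ1 := by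
            rw [mul_assoc, mul_assoc, ← pow_succ', pow_succ]
            group
        _ = S.Δ ^ t * (w * S.δ1) := by rw [h, pow_succ']; group
    obtain ⟨r, p, hp, hx'⟩ := mem_thetaBar_iff.mp (ih hΔ (mul_mem hw S.δ1_mem_M₁) h')
    have hcomm : Commute S.δ1 (S.theta ^ r * p) :=
      ((S.commute_theta hc S.δ1_mem_G₁).symm.pow_right r).mul_right
        (S.commute_δ1 (S.M₁_le_G₁ hp))
    refine mem_thetaBar_iff.mpr ⟨r + 1, p, hp, ?_⟩
    calc x = S.theta * (S.δ1 * (S.Δ⁻¹ * (x * S.δ1)) * S.δ1⁻¹) := by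
          rw [← S.theta_mul_δ1]; group
      _ = S.theta ^ (r + 1) * p := by rw [hx', hcomm.eq, pow_succ']; group

theorem mem_thetaBar_of_eq_theta_zpow_mul (hc : S.car = ⊤) {T : ℤ} (hx : x ∈ S.M)
    (hy : y ∈ S.G₁) (h : x = S.theta ^ T * y) : x ∈ thetaBar S.M₁ S.theta := by
  obtain ⟨P, hP, n, rfl⟩ := S.exists_eq_mul_inv_δ1_pow hy
  obtain ⟨t, rfl | rfl⟩ := Int.eq_nat_or_neg T
  · refine S.mem_thetaBar_of_mul_δ1_pow_eq hc t (m := n + t) hx hP ?_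
    have hΔ : S.Δ ^ t = S.theta ^ t * S.δ1 ^ t := by
      rw [← S.theta_mul_δ1, (S.commute_theta hc S.δ1_mem_G₁).mul_pow]
    calc x * S.δ1 ^ (n + t) = S.theta ^ t * (P * S.δ1 ^ t) := by
          rw [h, zpow_natCast, pow_add]; group
      _ = S.Δ ^ t * P := by
        rw [((S.commute_δ1 (S.M₁_le_G₁ hP)).pow_left t).eq.symm, hΔ, mul_assoc]
  · -- here `x δ1ⁿ θᵗ = P`, so `x` left-divides `P`
    refine Or.inr (S.mem_M₁_of_leL_of_mem_M₁ hc hx hP (leL_of_eq_mul (r := S.δ1 ^ n * S.theta ^ t)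
      ?_ (mul_mem (pow_mem S.par1.mem n) (pow_mem S.theta_mem t))))
    rw [h, zpow_neg, zpow_natCast]
    calc P = (S.theta ^ t)⁻¹ * (P * S.theta ^ t) := by
          rw [← ((S.commute_theta hc (S.M₁_le_G₁ hP)).pow_left t).eq]; group
      _ = _ := by group

theorem exists_eq_theta_zpow_mul_of_mem_closure (hc : S.car = ⊤)
    (hx : x ∈ Subgroup.closure (insert S.theta (S.G₁ : Set G))) :
    ∃ T : ℤ, ∃ y ∈ S.G₁, x = S.theta ^ T * y := by
  induction hx using Subgroup.closure_induction with
  | mem x hx =>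
    rcases hx with rfl | hx
    · exact ⟨1, 1, one_mem _, by simp⟩
    · exact ⟨0, x, hx, by simp⟩
  | one => exact ⟨0, 1, one_mem _, by simp⟩
  | mul x y _ _ hx hy =>
    obtain ⟨T, a, ha, rfl⟩ := hx
    obtain ⟨U, b, hb, rfl⟩ := hy
    refine ⟨T + U, a * b, mul_mem ha hb, ?_⟩
    rw [zpow_add, mul_assoc, ← mul_assoc a, ← ((S.commute_theta hc ha).zpow_left U).eq]
    group
  | inv x _ hx =>
    obtain ⟨T, a, ha, rfl⟩ := hx
    refine ⟨-T, a⁻¹, inv_mem ha, ?_⟩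
    rw [mul_inv_rev, zpow_neg, ((S.commute_theta hc ha).zpow_left T).inv_inv.eq]

theorem thetaBar_subset_closure :
    thetaBar S.M₁ S.theta ⊆ Subgroup.closure (insert S.theta (S.G₁ : Set G)) := by
  intro x hx
  obtain ⟨k, a₀, ha₀, rfl⟩ := mem_thetaBar_iff.mp hx
  exact mul_mem (pow_mem (Subgroup.subset_closure (Set.mem_insert _ _)) k)
    (Subgroup.subset_closure (Set.mem_insert_of_mem _ (S.M₁_le_G₁ ha₀)))

theorem mem_thetaBar_of_mem_closure (hc : S.car = ⊤) (hx : x ∈ S.M)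
    (hK : x ∈ Subgroup.closure (insert S.theta (S.G₁ : Set G))) :
    x ∈ thetaBar S.M₁ S.theta :=
  let ⟨_, _, hy, h⟩ := S.exists_eq_theta_zpow_mul_of_mem_closure hc hK
  S.mem_thetaBar_of_eq_theta_zpow_mul hc hx hy h

end Setting

end GarsideOrder

open GarsideOrder in
/-- For every `a ∈ Θ̄` and every `b ∈ M \ Θ̄`, both `ab ∈ M \ Θ̄` and `ba ∈ M \ Θ̄`. -/
theorem statement4 {G : Type*} [Group G] (S : Setting G) (hcar : S.car = ⊤) :
    ∀ a ∈ thetaBar S.M₁ S.theta, ∀ b ∈ S.M, b ∉ thetaBar S.M₁ S.theta →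
      (a * b ∈ S.M ∧ a * b ∉ thetaBar S.M₁ S.theta) ∧
      (b * a ∈ S.M ∧ b * a ∉ thetaBar S.M₁ S.theta) := by
  intro a ha b hb hbΘ
  have haM := S.thetaBar_subset_M ha
  have haK := S.thetaBar_subset_closure ha
  refine ⟨⟨mul_mem haM hb, fun hab => hbΘ ?_⟩, mul_mem hb haM, fun hba => hbΘ ?_⟩
  · refine S.mem_thetaBar_of_mem_closure hcar hb ?_
    simpa using mul_mem (inv_mem haK) (S.thetaBar_subset_closure hab)
  · refine S.mem_thetaBar_of_mem_closure hcar hb ?_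
    simpa using mul_mem (S.thetaBar_subset_closure hba) (inv_mem haK)
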